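/- The birational transformation s₁ : (x,y,z,w;α₁,α₂,α₃) ↦ (x + α₂/y, y, z, w; α₁+2α₂, −α₂, α₃) leaves the Hamiltonian H = −2x²y + 2y² − 2ty − 2α₂x + z²w + w² + tw + α₃z − 3yw invariant as a rational function (for y ≠ 0). -/
import Mathlib

/-- The Hamiltonian H = −2x²y + 2y² − 2ty − 2α₂x + z²w + w² + tw + α₃z − 3yw. -/
noncomputable def Hfun (α₂ α₃ x y z w t : ℂ) : ℂ :=
  -2 * x ^ 2 * y + 2 * y ^ 2 - 2 * t * y - 2 * α₂ * x
    + z ^ 2 * w + w ^ 2 + t * w + α₃ * z - 3 * y * w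

/-- s₁ : (x,y,z,w;α₁,α₂,α₃) ↦ (x + α₂/y, y, z, w; α₁+2α₂, −α₂, α₃)
leaves H invariant (for y ≠ 0). -/
theorem s1_preserves_H (α₂ α₃ x y z w t : ℂ) (hy : y ≠ 0) :
    Hfun (-α₂) α₃ (x + α₂ / y) y z w t = Hfun α₂ α₃ x y z w t := by
  unfold Hfun
  field_simp
  ring
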